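/- If P = Q^{-1} is the time-limited controllability Gramian of (A_r, B_r) and the cross-Gramian satisfies P̃_T = V_t P (established in Theorem 1), then the first-order optimality condition C_r P = C V_t P, i.e., C_r P̂_T = C P̃_T, holds when C_r := C V_t; hence the reduced model (A_r, B_r, C V_t) is time-limited pseudo-optimal: ‖H − Ĥ_r‖²_{H₂,t} = ‖H‖²_{H₂,t} − ‖Ĥ_r‖²_{H₂,t}. -/

import Mathlib

/-!
After the similarity `e^{τA_r} = Q_S⁻¹ e^{-τS_rᴴ} Q_S`, both reduced Gramians are congruent to
integrals `J = ∫₀ᵗ e^{τA} M e^{τS} dτ`, and differentiating the integrand shows that `J` solves the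
Sylvester equation `A J + J S = e^{tA} M e^{tS} - M`. When `A` and `S` are Hurwitz, `σ(A)` and
`σ(-S)` are disjoint, so this equation has only one solution and `J` is the solution supplied by the
construction: the Lyapunov equation for `Q_S` gives `P̂_T = Q_Sᴴ⁻¹`, and the Sylvester equation for
`V_t` gives `P̃_T = V_t Q_Sᴴ⁻¹`. Hence `C_r P̂_T = C V_t Q_Sᴴ⁻¹ = C P̃_T`, so the cross term of the
error formula equals `tr (C_r P̂_T C_rᴴ)`.
-/

open Matrix MeasureTheory NormedSpace

namespace Matrix

section Sylvester

open Polynomial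

variable {K : Type*} [Field K] {ι κ : Type*}

theorem pow_mul_eq_mul_pow_of_mul_eq_mul [Fintype ι] [DecidableEq ι] [Fintype κ]
    [DecidableEq κ] {A : Matrix ι ι K} {B : Matrix κ κ K} {X : Matrix ι κ K}
    (h : A * X = X * B) (k : ℕ) : A ^ k * X = X * B ^ k := by
  induction k with
  | zero => simp
  | succ k ih =>
    rw [pow_succ, Matrix.mul_assoc, h, ← Matrix.mul_assoc, ih, Matrix.mul_assoc, ← pow_succ]

theorem aeval_mul_eq_mul_aeval_of_mul_eq_mul [Fintype ι] [DecidableEq ι] [Fintype κ]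
    [DecidableEq κ] {A : Matrix ι ι K} {B : Matrix κ κ K} {X : Matrix ι κ K}
    (h : A * X = X * B) (p : K[X]) : aeval A p * X = X * aeval B p := by
  simp only [aeval_eq_sum_range, Matrix.sum_mul, Matrix.mul_sum, Matrix.smul_mul,
    Matrix.mul_smul, pow_mul_eq_mul_pow_of_mul_eq_mul h]

/-- `χ_B(A) X = X χ_B(B) = 0`, and `χ_B(A)` is invertible by the spectral mapping theorem. -/
theorem eq_zero_of_mul_eq_mul_of_disjoint_spectrum [IsAlgClosed K] [Fintype ι] [DecidableEq ι]
    [Fintype κ] [DecidableEq κ] {A : Matrix ι ι K} {B : Matrix κ κ K}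
    (hAB : Disjoint (spectrum K A) (spectrum K B)) {X : Matrix ι κ K} (h : A * X = X * B) :
    X = 0 := by
  cases isEmpty_or_nonempty κ
  · exact Matrix.ext fun _ j => isEmptyElim j
  have hunit : IsUnit (aeval A B.charpoly) := by
    rw [← spectrum.zero_notMem_iff K, spectrum.map_polynomial_aeval_of_degree_pos A _
      (by rw [charpoly_degree_eq_dim]; exact_mod_cast Fintype.card_pos)]
    rintro ⟨μ, hμA, hμB⟩
    exact hAB.ne_of_mem hμA (mem_spectrum_iff_isRoot_charpoly.mpr hμB) rfl
  have hzero : aeval A B.charpoly * X = 0 := by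
    rw [aeval_mul_eq_mul_aeval_of_mul_eq_mul h, aeval_self_charpoly, Matrix.mul_zero]
  rw [← Matrix.nonsing_inv_mul_cancel_left _ X ((isUnit_iff_isUnit_det _).mp hunit), hzero,
    Matrix.mul_zero]

end Sylvester

section Calculus

variable {𝕜 : Type*} [RCLike 𝕜] {ι κ ρ : Type*}

open scoped Norms.Operator in
theorem hasDerivAt_exp_smul_apply [Fintype ι] [DecidableEq ι] (A : Matrix ι ι 𝕜) (τ : ℝ)
    (i j : ι) : HasDerivAt (fun s : ℝ => exp (s • A) i j) ((A * exp (τ • A)) i j) τ :=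
  (entryLinearMap ℝ 𝕜 i j).toContinuousLinearMap.hasFDerivAt.comp_hasDerivAt τ
    (hasDerivAt_exp_smul_const' A τ)

theorem hasDerivAt_mul_apply [Fintype κ] {f : ℝ → Matrix ι κ 𝕜} {g : ℝ → Matrix κ ρ 𝕜}
    {f' : Matrix ι κ 𝕜} {g' : Matrix κ ρ 𝕜} {τ : ℝ}
    (hf : ∀ i j, HasDerivAt (fun s => f s i j) (f' i j) τ)
    (hg : ∀ i j, HasDerivAt (fun s => g s i j) (g' i j) τ) (i : ι) (j : ρ) :
    HasDerivAt (fun s => (f s * g s) i j) ((f' * g τ + f τ * g') i j) τ := by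
  simp only [mul_apply, add_apply, ← Finset.sum_add_distrib]
  exact HasDerivAt.fun_sum fun k _ => (hf i k).mul (hg k j)

theorem hasDerivAt_exp_smul_mul_mul_exp_smul_apply [Fintype ι] [DecidableEq ι] [Fintype κ]
    [DecidableEq κ] (A : Matrix ι ι 𝕜) (M : Matrix ι κ 𝕜) (S : Matrix κ κ 𝕜) (τ : ℝ)
    (i : ι) (j : κ) :
    HasDerivAt (fun s : ℝ => (exp (s • A) * M * exp (s • S)) i j)
      ((A * (exp (τ • A) * M * exp (τ • S)) + exp (τ • A) * M * exp (τ • S) * S) i j) τ := by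
  have hM : ∀ i j, HasDerivAt (fun _ : ℝ => M i j) ((0 : Matrix ι κ 𝕜) i j) τ :=
    fun i j => hasDerivAt_const τ (M i j)
  have h := hasDerivAt_mul_apply (hasDerivAt_mul_apply (hasDerivAt_exp_smul_apply A τ) hM)
    (hasDerivAt_exp_smul_apply S τ) i j
  rwa [← ((Commute.refl S).smul_left τ).exp_left.eq, Matrix.mul_zero, add_zero,
    Matrix.mul_assoc A, Matrix.mul_assoc A, ← Matrix.mul_assoc _ _ S] at h

theorem continuous_exp_smul_mul_mul_exp_smul [Fintype ι] [DecidableEq ι] [Fintype κ]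
    [DecidableEq κ] (A : Matrix ι ι 𝕜) (M : Matrix ι κ 𝕜) (S : Matrix κ κ 𝕜) :
    Continuous fun τ : ℝ => exp (τ • A) * M * exp (τ • S) :=
  continuous_matrix fun i j => continuous_iff_continuousAt.2 fun τ =>
    (hasDerivAt_exp_smul_mul_mul_exp_smul_apply A M S τ i j).continuousAt

theorem mul_of_intervalIntegral [Fintype ι] (P : Matrix ρ ι 𝕜) {f : ℝ → Matrix ι κ 𝕜}
    (hf : Continuous f) (a b : ℝ) :
    P * (of fun i j => ∫ τ in a..b, f τ i j) = of fun i j => ∫ τ in a..b, (P * f τ) i j := by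
  ext i j
  simp only [mul_apply, of_apply, ← intervalIntegral.integral_const_mul]
  exact (intervalIntegral.integral_finsetSum fun k _ =>
    (continuous_const.mul (hf.matrix_elem k j)).intervalIntegrable a b).symm

theorem of_intervalIntegral_mul [Fintype κ] {f : ℝ → Matrix ι κ 𝕜} (hf : Continuous f)
    (Q : Matrix κ ρ 𝕜) (a b : ℝ) :
    (of fun i j => ∫ τ in a..b, f τ i j) * Q = of fun i j => ∫ τ in a..b, (f τ * Q) i j := by
  ext i j
  simp only [mul_apply, of_apply, ← intervalIntegral.integral_mul_const]
  exact (intervalIntegral.integral_finsetSum fun k _ =>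
    ((hf.matrix_elem i k).mul continuous_const).intervalIntegrable a b).symm

theorem mul_of_intervalIntegral_add_of_intervalIntegral_mul [Fintype ι] [DecidableEq ι] [Fintype κ]
    [DecidableEq κ] (A : Matrix ι ι 𝕜) (M : Matrix ι κ 𝕜) (S : Matrix κ κ 𝕜) (t : ℝ) :
    A * (of fun i j => ∫ τ in 0..t, (exp (τ • A) * M * exp (τ • S)) i j)
      + (of fun i j => ∫ τ in 0..t, (exp (τ • A) * M * exp (τ • S)) i j) * S
      = exp (t • A) * M * exp (t • S) - M := by
  have hF := continuous_exp_smul_mul_mul_exp_smul A M S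
  have hAF := continuous_const.matrix_mul hF (A := fun _ : ℝ => A)
  have hFS := hF.matrix_mul continuous_const (B := fun _ : ℝ => S)
  rw [mul_of_intervalIntegral A hF, of_intervalIntegral_mul hF S]
  ext i j
  rw [add_apply, of_apply, of_apply, ← intervalIntegral.integral_add
    ((hAF.matrix_elem i j).intervalIntegrable 0 t) ((hFS.matrix_elem i j).intervalIntegrable 0 t)]
  simp only [← add_apply]
  rw [intervalIntegral.integral_eq_sub_of_hasDerivAt
    (fun τ _ => hasDerivAt_exp_smul_mul_mul_exp_smul_apply A M S τ i j)
    (((hAF.add hFS).matrix_elem i j).intervalIntegrable 0 t)]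
  simp

end Calculus

section Hurwitz

variable {ι κ : Type*} [Fintype ι] [DecidableEq ι] [Fintype κ] [DecidableEq κ]

def IsHurwitz (A : Matrix ι ι ℂ) : Prop := ∀ μ ∈ spectrum ℂ A, μ.re < 0

theorem isHurwitz_neg_iff {S : Matrix ι ι ℂ} :
    (-S).IsHurwitz ↔ ∀ μ ∈ spectrum ℂ S, 0 < μ.re := by
  simp only [IsHurwitz, ← spectrum.neg_eq, Set.mem_neg]
  exact ⟨fun h μ hμ => by simpa using h (-μ) (by simpa using hμ), fun h μ hμ => by
    simpa using h _ hμ⟩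

theorem IsHurwitz.conjTranspose {A : Matrix ι ι ℂ} (hA : A.IsHurwitz) : Aᴴ.IsHurwitz := by
  intro μ hμ
  rw [← star_eq_conjTranspose, spectrum.map_star, Set.mem_star] at hμ
  simpa using hA _ hμ

theorem IsHurwitz.disjoint_spectrum_neg {A : Matrix ι ι ℂ} {S : Matrix κ κ ℂ}
    (hA : A.IsHurwitz) (hS : S.IsHurwitz) : Disjoint (spectrum ℂ A) (spectrum ℂ (-S)) :=
  Set.disjoint_left.2 fun μ hμA hμS =>
    (hA μ hμA).not_gt (isHurwitz_neg_iff.mp (by rwa [neg_neg]) μ hμS)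

theorem IsHurwitz.intervalIntegral_eq_of_sylvester {A : Matrix ι ι ℂ} {S : Matrix κ κ ℂ}
    (hA : A.IsHurwitz) (hS : S.IsHurwitz) {M V : Matrix ι κ ℂ} {t : ℝ}
    (hV : A * V + V * S = exp (t • A) * M * exp (t • S) - M) :
    (of fun i j => ∫ τ in 0..t, (exp (τ • A) * M * exp (τ • S)) i j) = V := by
  set J := of fun i j => ∫ τ in 0..t, (exp (τ • A) * M * exp (τ • S)) i j
  have hJ : A * J + J * S = exp (t • A) * M * exp (t • S) - M :=
    mul_of_intervalIntegral_add_of_intervalIntegral_mul A M S t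
  refine sub_eq_zero.mp (eq_zero_of_mul_eq_mul_of_disjoint_spectrum
    (hA.disjoint_spectrum_neg hS) ?_)
  calc A * (J - V) = (A * J + J * S) - (A * V + V * S) + (J - V) * -S := by
        simp only [Matrix.mul_sub, Matrix.sub_mul, Matrix.mul_neg]; abel
    _ = (J - V) * -S := by rw [hJ, hV, sub_self, zero_add]

end Hurwitz

end Matrix

section ReducedModel

theorem exp_smul_neg_conj {𝕜 κ : Type*} [RCLike 𝕜] [Fintype κ] [DecidableEq κ]
    {Q : Matrix κ κ 𝕜} (hQ : IsUnit Q) (M : Matrix κ κ 𝕜) (τ : ℝ) :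
    exp (τ • -(Q⁻¹ * M * Q)) = Q⁻¹ * exp (τ • -M) * Q := by
  rw [← exp_conj' Q _ hQ, Matrix.mul_smul, Matrix.smul_mul, Matrix.mul_neg, Matrix.neg_mul,
    smul_neg]

theorem exp_smul_conjTranspose_neg_conj {𝕜 κ : Type*} [RCLike 𝕜] [Fintype κ] [DecidableEq κ]
    {Q : Matrix κ κ 𝕜} (hQ : IsUnit Q) (S : Matrix κ κ 𝕜) (τ : ℝ) :
    exp (τ • (-(Q⁻¹ * Sᴴ * Q))ᴴ) = Qᴴ * exp (τ • -S) * Qᴴ⁻¹ := by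
  rw [← star_trivial τ, ← conjTranspose_smul, exp_conjTranspose, exp_smul_neg_conj hQ,
    star_trivial]
  simp [conjTranspose_mul, conjTranspose_nonsing_inv, ← exp_conjTranspose, conjTranspose_smul,
    Matrix.mul_assoc]

theorem conjTranspose_neg_inv_mul {𝕜 κ ρ : Type*} [RCLike 𝕜] [Fintype κ] [DecidableEq κ]
    (Q : Matrix κ κ 𝕜) (L : Matrix ρ κ 𝕜) : (-(Q⁻¹ * Lᴴ))ᴴ = -(L * Qᴴ⁻¹) := by
  rw [conjTranspose_neg, conjTranspose_mul, conjTranspose_nonsing_inv,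
    conjTranspose_conjTranspose]

variable {ι κ ρ : Type*} [Fintype ι] [DecidableEq ι] [Fintype κ] [DecidableEq κ] [Fintype ρ]
  {S Q : Matrix κ κ ℂ} {L : Matrix ρ κ ℂ} {t : ℝ}

theorem tlpork_reduced_gramian_eq (hS : (-S).IsHurwitz) (hQ : IsUnit Q)
    (hLyap : -(Sᴴ * Q) - Q * S + Lᴴ * L - exp (-(t • Sᴴ)) * Lᴴ * L * exp (-(t • S)) = 0) :
    (of fun i j => ∫ τ in (0:ℝ)..t, (exp (τ • -(Q⁻¹ * Sᴴ * Q)) * -(Q⁻¹ * Lᴴ)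
      * (-(Q⁻¹ * Lᴴ))ᴴ * exp (τ • (-(Q⁻¹ * Sᴴ * Q))ᴴ)) i j) = Qᴴ⁻¹ := by
  have hQdet : IsUnit Q.det := (isUnit_iff_isUnit_det Q).mp hQ
  have hQH : IsUnit Qᴴ.det := by rw [det_conjTranspose]; exact hQdet.star
  have hK : (of fun i j => ∫ τ in (0:ℝ)..t,
      (exp (τ • -Sᴴ) * (Lᴴ * L) * exp (τ • -S)) i j) = Q := by
    refine (conjTranspose_neg S ▸ hS.conjTranspose).intervalIntegral_eq_of_sylvester hS ?_
    rw [Matrix.neg_mul, Matrix.mul_neg, ← sub_eq_zero, ← hLyap, smul_neg, smul_neg]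
    simp only [Matrix.mul_assoc]
    abel
  have hintegrand : ∀ τ : ℝ, exp (τ • -(Q⁻¹ * Sᴴ * Q)) * -(Q⁻¹ * Lᴴ)
      * (-(Q⁻¹ * Lᴴ))ᴴ * exp (τ • (-(Q⁻¹ * Sᴴ * Q))ᴴ)
      = Q⁻¹ * (exp (τ • -Sᴴ) * (Lᴴ * L) * exp (τ • -S)) * Qᴴ⁻¹ := by
    intro τ
    rw [exp_smul_neg_conj hQ Sᴴ, exp_smul_conjTranspose_neg_conj hQ S, conjTranspose_neg_inv_mul]
    simp only [Matrix.mul_neg, Matrix.neg_mul, neg_neg, Matrix.mul_assoc,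
      mul_nonsing_inv_cancel_left _ _ hQdet, nonsing_inv_mul_cancel_left _ _ hQH]
  have hG := continuous_exp_smul_mul_mul_exp_smul (-Sᴴ) (Lᴴ * L) (-S)
  simp only [hintegrand]
  rw [← of_intervalIntegral_mul (continuous_const.matrix_mul hG),
    ← mul_of_intervalIntegral _ hG, hK, nonsing_inv_mul _ hQdet, Matrix.one_mul]

theorem tlpork_cross_gramian_eq {A : Matrix ι ι ℂ} {B : Matrix ι ρ ℂ} {V : Matrix ι κ ℂ}
    (hA : A.IsHurwitz) (hS : (-S).IsHurwitz) (hQ : IsUnit Q)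
    (hV : A * V = V * S + B * L - exp (t • A) * B * L * exp (-(t • S))) :
    (of fun i j => ∫ τ in (0:ℝ)..t, (exp (τ • A) * B * (-(Q⁻¹ * Lᴴ))ᴴ
      * exp (τ • (-(Q⁻¹ * Sᴴ * Q))ᴴ)) i j) = V * Qᴴ⁻¹ := by
  have hQH : IsUnit Qᴴ.det := by
    rw [det_conjTranspose]; exact ((isUnit_iff_isUnit_det Q).mp hQ).star
  have hJ : (of fun i j => ∫ τ in (0:ℝ)..t,
      (exp (τ • A) * (B * L) * exp (τ • -S)) i j) = -V := by
    refine hA.intervalIntegral_eq_of_sylvester hS ?_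
    rw [Matrix.mul_neg, Matrix.neg_mul, Matrix.mul_neg, neg_neg, hV, smul_neg]
    simp only [Matrix.mul_assoc]
    abel
  have hintegrand : ∀ τ : ℝ, exp (τ • A) * B * (-(Q⁻¹ * Lᴴ))ᴴ * exp (τ • (-(Q⁻¹ * Sᴴ * Q))ᴴ)
      = exp (τ • A) * (B * L) * exp (τ • -S) * -Qᴴ⁻¹ := by
    intro τ
    rw [exp_smul_conjTranspose_neg_conj hQ S, conjTranspose_neg_inv_mul]
    simp only [Matrix.mul_neg, Matrix.neg_mul, Matrix.mul_assoc,
      nonsing_inv_mul_cancel_left _ _ hQH]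
  simp only [hintegrand]
  rw [← of_intervalIntegral_mul (continuous_exp_smul_mul_mul_exp_smul _ _ _), hJ,
    Matrix.neg_mul, Matrix.mul_neg, neg_neg]

end ReducedModel

theorem tlpork_pseudo_optimality_general
    (n r m p : ℕ) (A : Matrix (Fin n) (Fin n) ℂ) (B : Matrix (Fin n) (Fin m) ℂ)
    (C : Matrix (Fin p) (Fin n) ℂ)
    (hA : ∀ μ ∈ spectrum ℂ A, μ.re < 0)
    (t : ℝ)
    (S_r : Matrix (Fin r) (Fin r) ℂ) (L_r : Matrix (Fin m) (Fin r) ℂ)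
    (hS : ∀ μ ∈ spectrum ℂ S_r, 0 < μ.re)
    (Q_S : Matrix (Fin r) (Fin r) ℂ) (hQinv : IsUnit Q_S)
    (hLyap : -(S_rᴴ * Q_S) - Q_S * S_r + L_rᴴ * L_r
        - exp (-(t • S_rᴴ)) * L_rᴴ * L_r * exp (-(t • S_r)) = 0)
    (A_r : Matrix (Fin r) (Fin r) ℂ) (B_r : Matrix (Fin r) (Fin m) ℂ)
    (C_r : Matrix (Fin p) (Fin r) ℂ)
    (hA_r : A_r = -(Q_S⁻¹ * S_rᴴ * Q_S)) (hB_r : B_r = -(Q_S⁻¹ * L_rᴴ))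
    (V_t : Matrix (Fin n) (Fin r) ℂ)
    (hVt : A * V_t = V_t * S_r + B * L_r - exp (t • A) * B * L_r * exp (-(t • S_r)))
    (hC_r : C_r = C * V_t)
    (P_T : Matrix (Fin n) (Fin n) ℂ) (Phat : Matrix (Fin r) (Fin r) ℂ)
    (Ptilde : Matrix (Fin n) (Fin r) ℂ)
    (hPhat : Phat = Matrix.of fun i j =>
      ∫ τ in (0:ℝ)..t, (exp (τ • A_r) * B_r * B_rᴴ * exp (τ • A_rᴴ)) i j)
    (hPtilde : Ptilde = Matrix.of fun i j =>
      ∫ τ in (0:ℝ)..t, (exp (τ • A) * B * B_rᴴ * exp (τ • A_rᴴ)) i j) :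
    C_r * Phat = C * Ptilde ∧
      (Matrix.trace (C * P_T * Cᴴ)).re - 2 * (Matrix.trace (C * Ptilde * C_rᴴ)).re
          + (Matrix.trace (C_r * Phat * C_rᴴ)).re
        = (Matrix.trace (C * P_T * Cᴴ)).re - (Matrix.trace (C_r * Phat * C_rᴴ)).re := by
  subst hA_r hB_r
  have hS' : (-S_r).IsHurwitz := isHurwitz_neg_iff.mpr hS
  have hPhat' : Phat = Q_Sᴴ⁻¹ := hPhat ▸ tlpork_reduced_gramian_eq hS' hQinv hLyap
  have hPtilde' : Ptilde = V_t * Q_Sᴴ⁻¹ := hPtilde ▸ tlpork_cross_gramian_eq hA hS' hQinv hVt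
  have hopt : C_r * Phat = C * Ptilde := by rw [hC_r, hPhat', hPtilde', Matrix.mul_assoc]
  refine ⟨hopt, ?_⟩
  rw [← hopt]
  ring

/-- In the setting of Theorem 1, with `C_r = C V_t`, `P̂_T = Q_S⁻¹`, and
`P̃_T = V_t Q_S⁻¹`, the optimality condition `C_r P̂_T = C P̃_T` holds and the reduced
model is time-limited pseudo-optimal:
`‖H−Ĥ_r‖²_{H₂,t} = ‖H‖²_{H₂,t} − ‖Ĥ_r‖²_{H₂,t}` in trace form. -/
theorem tlpork_pseudo_optimality
    (n r m p : ℕ) (A : Matrix (Fin n) (Fin n) ℂ) (B : Matrix (Fin n) (Fin m) ℂ)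
    (C : Matrix (Fin p) (Fin n) ℂ)
    (hA : ∀ μ ∈ spectrum ℂ A, μ.re < 0)
    (t : ℝ) (ht : 0 < t)
    (S_r : Matrix (Fin r) (Fin r) ℂ) (L_r : Matrix (Fin m) (Fin r) ℂ)
    (hS : ∀ μ ∈ spectrum ℂ S_r, 0 < μ.re)
    (Q_S : Matrix (Fin r) (Fin r) ℂ) (hQinv : IsUnit Q_S)
    (hLyap : -(S_rᴴ * Q_S) - Q_S * S_r + L_rᴴ * L_r
        - exp (-(t • S_rᴴ)) * L_rᴴ * L_r * exp (-(t • S_r)) = 0)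
    (A_r : Matrix (Fin r) (Fin r) ℂ) (B_r : Matrix (Fin r) (Fin m) ℂ)
    (C_r : Matrix (Fin p) (Fin r) ℂ)
    (hA_r : A_r = -(Q_S⁻¹ * S_rᴴ * Q_S)) (hB_r : B_r = -(Q_S⁻¹ * L_rᴴ))
    (hA_rHur : ∀ μ ∈ spectrum ℂ A_r, μ.re < 0)
    (V_t : Matrix (Fin n) (Fin r) ℂ)
    (hVt : A * V_t = V_t * S_r + B * L_r - exp (t • A) * B * L_r * exp (-(t • S_r)))
    (hC_r : C_r = C * V_t)
    (P_T : Matrix (Fin n) (Fin n) ℂ) (Phat : Matrix (Fin r) (Fin r) ℂ)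
    (Ptilde : Matrix (Fin n) (Fin r) ℂ)
    (hP : P_T = Matrix.of fun i j =>
      ∫ τ in (0:ℝ)..t, (exp (τ • A) * B * Bᴴ * exp (τ • Aᴴ)) i j)
    (hPhat : Phat = Matrix.of fun i j =>
      ∫ τ in (0:ℝ)..t, (exp (τ • A_r) * B_r * B_rᴴ * exp (τ • A_rᴴ)) i j)
    (hPtilde : Ptilde = Matrix.of fun i j =>
      ∫ τ in (0:ℝ)..t, (exp (τ • A) * B * B_rᴴ * exp (τ • A_rᴴ)) i j) :
    C_r * Phat = C * Ptilde ∧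
      (Matrix.trace (C * P_T * Cᴴ)).re - 2 * (Matrix.trace (C * Ptilde * C_rᴴ)).re
          + (Matrix.trace (C_r * Phat * C_rᴴ)).re
        = (Matrix.trace (C * P_T * Cᴴ)).re - (Matrix.trace (C_r * Phat * C_rᴴ)).re :=
  tlpork_pseudo_optimality_general n r m p A B C hA t S_r L_r hS Q_S hQinv hLyap A_r B_r C_r hA_r
    hB_r V_t hVt hC_r P_T Phat Ptilde hPhat hPtilde
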